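/- Let λ = 2 − 2H and fix 0 < τ_1 < τ_0 < τ_2 < ∞. Then there exist a constant 𝒦 > 0 (depending only on H, τ_1, τ_2) and t_0 > 0 such that for all t ≥ t_0, r*(t) := sup |r_{u,u'}(s,τ,s',τ')| ≤ 𝒦 t^{−λ}, the supremum being taken over all u, u', s, s' > 0 and τ, τ' ∈ (τ_1, τ_2) with |us − u's'|/u ≥ t and |us − u's'|/u' ≥ t. -/

import Mathlib

open MeasureTheory Filter Set

noncomputable section

/-- The point `τ₀ = H/(1-H)`. -/
def tau0 (H : ℝ) : ℝ := H / (1 - H)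

/-- The correlation function `r_{u,u'}(s,τ,s',τ')` of the field `Z_u` (multiplied by
`ν(τ)ν(τ')`). -/
def rcorr (H u u' s τ s' τ' : ℝ) : ℝ :=
  (|u * s - u' * s'| ^ (2 * H) / (2 * (u * τ * (u' * τ')) ^ H)) *
    (|1 + u * τ / (u * s - u' * s')| ^ (2 * H)
      - |1 + (u * τ - u' * τ') / (u * s - u' * s')| ^ (2 * H)
      + |1 - u' * τ' / (u * s - u' * s')| ^ (2 * H) - 1)

/-!
Write `D = us − u's'`, `a = uτ/D` and `b = u'τ'/D`. Then `r = Δ(a, b) / (2 (|a||b|)^H)`, where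
`Δ(a, b) = |1+a|^{2H} − |1+a−b|^{2H} + |1−b|^{2H} − 1` is a mixed second difference of
`y ↦ (1+y)^{2H}`; for `|a|, |b| ≤ 1/4` the mean value theorem applied twice gives
`|Δ(a, b)| ≤ 8 |a||b|`, hence `|r| ≤ 4 (|a||b|)^{1−H}`. The separation conditions give
`|a|, |b| ≤ τ₂/t`, so `|r| ≤ 4 τ₂^{2−2H} t^{−(2−2H)}` as soon as `t ≥ 4τ₂`.
-/

def secondDiff (p a b : ℝ) : ℝ :=
  |1 + a| ^ p - |1 + (a - b)| ^ p + |1 - b| ^ p - 1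

theorem abs_second_diff_le_of_lipschitz_deriv {f f' : ℝ → ℝ} {K r : ℝ}
    (hf : ∀ x ∈ Icc (-(2 * r)) (2 * r), HasDerivAt f (f' x) x)
    (hf' : ∀ x ∈ Icc (-(2 * r)) (2 * r), ∀ y ∈ Icc (-(2 * r)) (2 * r),
      |f' y - f' x| ≤ K * |y - x|)
    {a b : ℝ} (ha : |a| ≤ r) (hb : |b| ≤ r) :
    |f a - f (a - b) + f (-b) - f 0| ≤ K * (|a| * |b|) := by
  obtain ⟨ha₁, ha₂⟩ := abs_le.1 ha
  obtain ⟨hb₁, hb₂⟩ := abs_le.1 hb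
  have hmem : ∀ y ∈ Icc (-r) r,
      y ∈ Icc (-(2 * r)) (2 * r) ∧ a + y ∈ Icc (-(2 * r)) (2 * r) := fun y hy =>
    ⟨⟨by linarith [hy.1], by linarith [hy.2]⟩, ⟨by linarith [hy.1], by linarith [hy.2]⟩⟩
  -- `g y = f (a + y) - f y` turns the second difference into a first difference of `g`.
  have hg : ∀ y ∈ Icc (-r) r, HasDerivWithinAt (fun y => f (a + y) - f y)
      (f' (a + y) - f' y) (Icc (-r) r) y := fun y hy =>
    (((hf _ (hmem y hy).2).comp_const_add a y).sub (hf y (hmem y hy).1)).hasDerivWithinAt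
  have hg' : ∀ y ∈ Icc (-r) r, ‖f' (a + y) - f' y‖ ≤ K * |a| := fun y hy => by
    simpa using hf' y (hmem y hy).1 _ (hmem y hy).2
  have hnegb : -b ∈ Icc (-r) r := ⟨by linarith, by linarith⟩
  have h0 : (0 : ℝ) ∈ Icc (-r) r := ⟨by linarith, by linarith⟩
  have key := (convex_Icc (-r) r).norm_image_sub_le_of_norm_hasDerivWithin_le hg hg' hnegb h0
  simp only [add_zero, ← sub_eq_add_neg, Real.norm_eq_abs, zero_sub, abs_neg] at key
  calc |f a - f (a - b) + f (-b) - f 0| = |f a - f 0 - (f (a - b) - f (-b))| := by ring_nf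
    _ ≤ K * (|a| * |b|) := by rw [← mul_assoc]; exact key

theorem hasDerivAt_one_add_rpow (p : ℝ) {x : ℝ} (hx : 0 < 1 + x) :
    HasDerivAt (fun y => (1 + y) ^ p) (p * (1 + x) ^ (p - 1)) x :=
  (Real.hasDerivAt_rpow_const (Or.inl hx.ne')).comp_const_add 1 x

theorem abs_second_deriv_one_add_rpow_le {p x : ℝ} (hp : p ∈ Icc (0 : ℝ) 2)
    (hx : x ∈ Icc (-(1 / 2) : ℝ) (1 / 2)) :
    |p * ((p - 1) * (1 + x) ^ (p - 1 - 1))| ≤ 8 := by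
  have hx₀ : 1 / 2 ≤ 1 + x := by linarith [hx.1]
  have hpow : (1 + x) ^ (p - 1 - 1) ≤ 4 :=
    calc (1 + x) ^ (p - 1 - 1) ≤ (1 / 2 : ℝ) ^ (p - 1 - 1) :=
          Real.rpow_le_rpow_of_nonpos (by norm_num) hx₀ (by linarith [hp.2])
      _ ≤ (1 / 2 : ℝ) ^ (-2 : ℝ) :=
          Real.rpow_le_rpow_of_exponent_ge (by norm_num) (by norm_num) (by linarith [hp.1])
      _ = 4 := by norm_num [Real.rpow_neg]
  have hp₁ : |p - 1| ≤ 1 := abs_le.2 ⟨by linarith [hp.1], by linarith [hp.2]⟩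
  rw [abs_mul, abs_mul, abs_of_nonneg hp.1, abs_of_nonneg (Real.rpow_nonneg (by linarith) _)]
  calc p * (|p - 1| * (1 + x) ^ (p - 1 - 1)) ≤ 2 * (1 * 4) := by
        gcongr
        exact hp.2
    _ = 8 := by norm_num

theorem abs_deriv_one_add_rpow_sub_le {p x y : ℝ} (hp : p ∈ Icc (0 : ℝ) 2)
    (hx : x ∈ Icc (-(1 / 2) : ℝ) (1 / 2)) (hy : y ∈ Icc (-(1 / 2) : ℝ) (1 / 2)) :
    |p * (1 + y) ^ (p - 1) - p * (1 + x) ^ (p - 1)| ≤ 8 * |y - x| := by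
  have hderiv : ∀ z ∈ Icc (-(1 / 2) : ℝ) (1 / 2),
      HasDerivWithinAt (fun z => p * (1 + z) ^ (p - 1))
      (p * ((p - 1) * (1 + z) ^ (p - 1 - 1))) (Icc (-(1 / 2)) (1 / 2)) z := fun z hz =>
    ((hasDerivAt_one_add_rpow (p - 1) (by linarith [hz.1])).const_mul p).hasDerivWithinAt
  simpa only [Real.norm_eq_abs] using (convex_Icc _ _).norm_image_sub_le_of_norm_hasDerivWithin_le
    hderiv (fun z hz => abs_second_deriv_one_add_rpow_le hp hz) hx hy

theorem abs_secondDiff_le {p a b : ℝ} (hp : p ∈ Icc (0 : ℝ) 2)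
    (ha : |a| ≤ 1 / 4) (hb : |b| ≤ 1 / 4) :
    |secondDiff p a b| ≤ 8 * (|a| * |b|) := by
  obtain ⟨ha₁, ha₂⟩ := abs_le.1 ha
  obtain ⟨hb₁, hb₂⟩ := abs_le.1 hb
  have hI : Icc (-(2 * (1 / 4))) (2 * (1 / 4)) = Icc (-(1 / 2) : ℝ) (1 / 2) := by norm_num
  have h := abs_second_diff_le_of_lipschitz_deriv (f := fun y => (1 + y) ^ p)
    (fun x hx => hasDerivAt_one_add_rpow p (by rw [hI] at hx; linarith [hx.1]))
    (fun x hx y hy => abs_deriv_one_add_rpow_sub_le hp (hI ▸ hx) (hI ▸ hy)) ha hb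
  rw [add_zero, Real.one_rpow, ← sub_eq_add_neg] at h
  rwa [secondDiff, abs_of_pos (by linarith : (0 : ℝ) < 1 + a),
    abs_of_pos (by linarith : (0 : ℝ) < 1 + (a - b)),
    abs_of_pos (by linarith : (0 : ℝ) < 1 - b)]

section rcorr

variable {H u u' s τ s' τ' : ℝ}

theorem rcorr_eq_secondDiff_div (hA : 0 ≤ u * τ) (hB : 0 ≤ u' * τ')
    (hD : u * s - u' * s' ≠ 0) :
    rcorr H u u' s τ s' τ' =
      secondDiff (2 * H) (u * τ / (u * s - u' * s')) (u' * τ' / (u * s - u' * s')) /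
        (2 * (|u * τ / (u * s - u' * s')| * |u' * τ' / (u * s - u' * s')|) ^ H) := by
  have hD' : 0 < |u * s - u' * s'| := abs_pos.2 hD
  rw [rcorr, secondDiff, sub_div, abs_div, abs_div, abs_of_nonneg hA, abs_of_nonneg hB,
    div_mul_div_comm, Real.div_rpow (by positivity) (by positivity), ← pow_two,
    ← Real.rpow_natCast_mul hD'.le, Nat.cast_ofNat]
  have : |u * s - u' * s'| ^ (2 * H) ≠ 0 := (Real.rpow_pos_of_pos hD' _).ne'
  field_simp

theorem abs_rcorr_le (hH : H ∈ Icc (0 : ℝ) 1) (hA : 0 < u * τ) (hB : 0 < u' * τ')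
    (hD : u * s - u' * s' ≠ 0)
    (ha : u * τ / |u * s - u' * s'| ≤ 1 / 4) (hb : u' * τ' / |u * s - u' * s'| ≤ 1 / 4) :
    |rcorr H u u' s τ s' τ'| ≤
      4 * (u * τ / |u * s - u' * s'| * (u' * τ' / |u * s - u' * s'|)) ^ (1 - H) := by
  have ha' : |u * τ / (u * s - u' * s')| = u * τ / |u * s - u' * s'| := by
    rw [abs_div, abs_of_pos hA]
  have hb' : |u' * τ' / (u * s - u' * s')| = u' * τ' / |u * s - u' * s'| := by
    rw [abs_div, abs_of_pos hB]
  have hΔ := abs_secondDiff_le (p := 2 * H) ⟨by linarith [hH.1], by linarith [hH.2]⟩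
    (ha'.trans_le ha) (hb'.trans_le hb)
  rw [ha', hb'] at hΔ
  rw [rcorr_eq_secondDiff_div hA.le hB.le hD, ha', hb']
  set z := u * τ / |u * s - u' * s'| * (u' * τ' / |u * s - u' * s'|)
  have hz : 0 < z := by positivity
  rw [abs_div, abs_of_pos (by positivity : 0 < 2 * z ^ H)]
  calc |secondDiff (2 * H) (u * τ / (u * s - u' * s')) (u' * τ' / (u * s - u' * s'))| /
        (2 * z ^ H) ≤ 8 * z / (2 * z ^ H) := by gcongr
    _ = 4 * z ^ (1 - H) := by
      rw [Real.rpow_sub hz, Real.rpow_one]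
      field_simp
      ring

end rcorr

theorem mul_div_le_div_of_le_div {u τ E t : ℝ} (hu : 0 < u) (ht : 0 < t) (hτ : 0 ≤ τ)
    (h : t ≤ E / u) : u * τ / E ≤ τ / t := by
  rw [le_div_iff₀ hu] at h
  calc u * τ / E ≤ u * τ / (t * u) := by gcongr
    _ = τ / t := by field_simp

theorem statement11_general (H : ℝ) (hH : H ∈ Set.Ioo (0:ℝ) 1)
    (τ₁ τ₂ : ℝ) (hτ₁ : 0 < τ₁) (hτ₂ : tau0 H < τ₂) :
    ∃ 𝒦 > (0:ℝ), ∃ t₀ > (0:ℝ), ∀ t, t₀ ≤ t →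
      ∀ u u' s s' τ τ' : ℝ, 0 < u → 0 < u' → 0 < s → 0 < s' →
        τ ∈ Set.Ioo τ₁ τ₂ → τ' ∈ Set.Ioo τ₁ τ₂ →
        t ≤ |u * s - u' * s'| / u → t ≤ |u * s - u' * s'| / u' →
        |rcorr H u u' s τ s' τ'| ≤ 𝒦 * t ^ (-(2 - 2 * H)) := by
  obtain ⟨hH₀, hH₁⟩ := hH
  have hτ₂pos : 0 < τ₂ := (div_pos hH₀ (by linarith) : 0 < tau0 H).trans hτ₂
  refine ⟨4 * τ₂ ^ (2 - 2 * H), by positivity, 4 * τ₂, by positivity, ?_⟩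
  intro t ht u u' s s' τ τ' hu hu' _ _ hτ hτ' hut hu't
  have ht₀ : 0 < t := by linarith
  have hD : u * s - u' * s' ≠ 0 := by
    rintro hD
    rw [hD, abs_zero, zero_div] at hut
    linarith
  have hτ₀ : 0 < τ := hτ₁.trans hτ.1
  have hτ₀' : 0 < τ' := hτ₁.trans hτ'.1
  have ha : u * τ / |u * s - u' * s'| ≤ τ₂ / t :=
    (mul_div_le_div_of_le_div hu ht₀ hτ₀.le hut).trans (by gcongr; exact hτ.2.le)
  have hb : u' * τ' / |u * s - u' * s'| ≤ τ₂ / t :=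
    (mul_div_le_div_of_le_div hu' ht₀ hτ₀'.le hu't).trans (by gcongr; exact hτ'.2.le)
  have hq : τ₂ / t ≤ 1 / 4 := by rw [div_le_iff₀ ht₀]; linarith
  calc |rcorr H u u' s τ s' τ'|
      ≤ 4 * (u * τ / |u * s - u' * s'| * (u' * τ' / |u * s - u' * s'|)) ^ (1 - H) :=
        abs_rcorr_le ⟨hH₀.le, hH₁.le⟩ (by positivity) (by positivity) hD (ha.trans hq)
          (hb.trans hq)
    _ ≤ 4 * (τ₂ / t * (τ₂ / t)) ^ (1 - H) := by gcongr
    _ = 4 * (τ₂ / t) ^ (2 - 2 * H) := by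
      rw [Real.mul_rpow (by positivity) (by positivity), ← Real.rpow_add (by positivity)]
      congr 2
      ring
    _ = 4 * τ₂ ^ (2 - 2 * H) * t ^ (-(2 - 2 * H)) := by
      rw [Real.div_rpow hτ₂pos.le ht₀.le, Real.rpow_neg ht₀.le]
      ring

theorem statement11 (H : ℝ) (hH : H ∈ Set.Ioo (0:ℝ) 1)
    (τ₁ τ₂ : ℝ) (hτ₁ : 0 < τ₁) (hτ₁0 : τ₁ < tau0 H) (hτ₂ : tau0 H < τ₂) :
    ∃ 𝒦 > (0:ℝ), ∃ t₀ > (0:ℝ), ∀ t, t₀ ≤ t →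
      ∀ u u' s s' τ τ' : ℝ, 0 < u → 0 < u' → 0 < s → 0 < s' →
        τ ∈ Set.Ioo τ₁ τ₂ → τ' ∈ Set.Ioo τ₁ τ₂ →
        t ≤ |u * s - u' * s'| / u → t ≤ |u * s - u' * s'| / u' →
        |rcorr H u u' s τ s' τ'| ≤ 𝒦 * t ^ (-(2 - 2 * H)) :=
  statement11_general H hH τ₁ τ₂ hτ₁ hτ₂
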